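/- Let z ≥ 1 and let ρ be a density matrix on H ⊗ H such that the SWAP test on ρ accepts with probability at least 1 - 1/z, i.e., Tr(((I+S)/2) ρ) ≥ 1 - 1/z. Then the trace distance between the two reduced states of ρ satisfies (1/2)‖Tr_2(ρ) - Tr_1(ρ)‖_tr ≤ 2/√z + 1/z. -/

import Mathlib

open Finset
open scoped ComplexOrder

noncomputable section

/-- The swap matrix on `H ⊗ H`. -/
def swapMatrix (ι : Type*) [Fintype ι] [DecidableEq ι] : Matrix (ι × ι) (ι × ι) ℂ :=
  Matrix.of fun p q => if p.1 = q.2 ∧ p.2 = q.1 then 1 else 0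

/-- Partial trace over the first tensor factor. -/
def ptraceFst {ι κ : Type*} [Fintype ι] (M : Matrix (ι × κ) (ι × κ) ℂ) : Matrix κ κ ℂ :=
  Matrix.of fun j j' => ∑ i, M (i, j) (i, j')

/-- Partial trace over the second tensor factor. -/
def ptraceSnd {ι κ : Type*} [Fintype κ] (M : Matrix (ι × κ) (ι × κ) ℂ) : Matrix ι ι ℂ :=
  Matrix.of fun i i' => ∑ j, M (i, j) (i', j)

/-- The outer product `|ψ⟩⟨φ|`. -/
def outer {n : Type*} (ψ φ : n → ℂ) : Matrix n n ℂ :=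
  Matrix.of fun p q => ψ p * star (φ q)

/-- The square root of a positive semidefinite matrix (the former `Matrix.PosSemidef.sqrt`). -/
def posSemidefSqrt {n : Type*} [Fintype n] [DecidableEq n] {A : Matrix n n ℂ}
    (hA : A.PosSemidef) : Matrix n n ℂ :=
  hA.1.eigenvectorUnitary.1 * Matrix.diagonal ((↑) ∘ (√·) ∘ hA.1.eigenvalues) *
    (star hA.1.eigenvectorUnitary : Matrix n n ℂ)

/-- The trace norm `‖A‖_tr = Tr √(AᴴA)`. -/
def traceNorm {n : Type*} [Fintype n] [DecidableEq n] (A : Matrix n n ℂ) : ℝ :=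
  ((posSemidefSqrt (Matrix.posSemidef_conjTranspose_mul_self A)).trace).re

/-- The trace distance between two states. -/
def traceDist {n : Type*} [Fintype n] [DecidableEq n] (ρ σ : Matrix n n ℂ) : ℝ :=
  (1 / 2) * traceNorm (ρ - σ)

/-!
Let `σ = Tr₂ ρ - Tr₁ ρ` and let `W` be the sign of `σ`, a Hermitian involution with
`‖σ‖_tr = Tr (W σ)`. Then `‖σ‖_tr = Tr (D ρ)` for `D = W ⊗ 1 - 1 ⊗ W`, which anticommutes with the
swap `S`; hence `D = P D Q + Q D P` for the projections `P = (1 + S)/2`, `Q = (1 - S)/2`. Since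
`‖D‖ ≤ 2`, Cauchy–Schwarz for the semi-inner product `⟨X, Y⟩ = Tr (Y ρ Xᴴ)` bounds each term by
`2 √(Tr (P ρ)) √(Tr (Q ρ))`, where `Tr (Q ρ) ≤ 1 / z` is the rejection probability.
-/

open Matrix Kronecker

lemma sqrt_mul_sqrt_one_sub_le {p z : ℝ} (hz : 0 < z) (hp : 1 - 1 / z ≤ p) :
    √p * √(1 - p) ≤ 1 / √z := by
  rcases le_or_gt p 1 with hp1 | hp1
  · calc √p * √(1 - p) ≤ 1 * √(1 / z) := by
          gcongr
          · exact Real.sqrt_le_one.mpr hp1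
          · linarith
      _ = 1 / √z := by rw [one_mul, one_div, one_div, Real.sqrt_inv]
  · rw [Real.sqrt_eq_zero'.mpr (by linarith : 1 - p ≤ 0), mul_zero]
    positivity

section StarAlgebra

variable {R : Type*} [Ring R]

lemma half_smul_one_add_mul_add_mul_eq_of_mul_eq_neg [Algebra ℂ R] {S D : R}
    (hSD : S * D = -(D * S)) :
    (2 : ℂ)⁻¹ • (1 + S) * D + D * ((2 : ℂ)⁻¹ • (1 + S)) = D := by
  have h : (1 + S) * D + D * (1 + S) = (2 : ℂ) • D := by
    rw [two_smul, add_mul, mul_add, hSD, one_mul, mul_one]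
    abel
  rw [smul_mul_assoc, mul_smul_comm, ← smul_add, h, smul_smul]
  norm_num

variable [StarRing R]

-- `1 + K L` witnesses `star (K - L) * (K - L) ≤ 4`, i.e. `‖K - L‖ ≤ 2`.
lemma star_mul_self_add_star_mul_self_eq_four {K L : R} (hK : IsSelfAdjoint K)
    (hL : IsSelfAdjoint L) (hKK : K * K = 1) (hLL : L * L = 1) (hKL : Commute K L) :
    star (1 + K * L) * (1 + K * L) + star (K - L) * (K - L) = 4 := by
  have hKLKL : K * L * (K * L) = 1 := by
    rw [hKL.symm.mul_mul_mul_comm, hKK, hLL, one_mul]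
  calc star (1 + K * L) * (1 + K * L) + star (K - L) * (K - L)
      = (1 + K * L) * (1 + K * L) + (K - L) * (K - L) := by
        rw [star_add, star_one, star_mul, hK.star_eq, hL.star_eq, star_sub, hK.star_eq,
          hL.star_eq, hKL.eq]
    _ = 1 + K * L * (K * L) + K * K + L * L + (K * L - L * K) := by noncomm_ring
    _ = 4 := by
        rw [hKLKL, hKK, hLL, hKL.eq, sub_self]
        norm_num

lemma isStarProjection_half_smul_one_add [Algebra ℂ R] [StarModule ℂ R] {S : R}
    (hS : IsSelfAdjoint S) (hSS : S * S = 1) :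
    IsStarProjection ((2 : ℂ)⁻¹ • (1 + S)) where
  isIdempotentElem := by
    have h : (1 + S) * (1 + S) = (2 : ℂ) • (1 + S) := by
      rw [two_smul, show (1 + S) * (1 + S) = 1 + S + S + S * S by noncomm_ring, hSS]
      abel
    rw [IsIdempotentElem, smul_mul_smul_comm, h, smul_smul]
    norm_num
  isSelfAdjoint := by
    simp [IsSelfAdjoint, hS.star_eq]

end StarAlgebra

section TraceNorm

variable {n : Type*} [Fintype n] [DecidableEq n]

lemma posSemidefSqrt_eq_cfc {A : Matrix n n ℂ} (hA : A.PosSemidef) :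
    posSemidefSqrt hA = cfc Real.sqrt A := by
  rw [hA.1.cfc_eq, IsHermitian.cfc, Unitary.conjStarAlgAut_apply]
  rfl

lemma traceNorm_eq_re_trace_cfc_abs {A : Matrix n n ℂ} (hA : A.IsHermitian) :
    traceNorm A = (cfc (fun x : ℝ => |x|) A).trace.re := by
  have hsq : Aᴴ * A = cfc (fun x : ℝ => x * x) A := by
    rw [cfc_mul (fun x : ℝ => x) (fun x : ℝ => x) A, cfc_id' ℝ A, hA.eq]
  rw [traceNorm, posSemidefSqrt_eq_cfc, hsq, ← cfc_comp' Real.sqrt (fun x : ℝ => x * x) A]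
  simp only [Real.sqrt_mul_self_eq_abs]

lemma Matrix.IsHermitian.exists_involution_traceNorm_eq {A : Matrix n n ℂ} (hA : A.IsHermitian) :
    ∃ W : Matrix n n ℂ, IsSelfAdjoint W ∧ W * W = 1 ∧ traceNorm A = (W * A).trace.re := by
  let s : ℝ → ℝ := fun x => if 0 ≤ x then 1 else -1
  have hs : ContinuousOn s (spectrum ℝ A) := (Set.toFinite _).continuousOn s
  refine ⟨cfc s A, cfc_predicate s A, ?_, ?_⟩
  · rw [← cfc_mul s s A, ← cfc_one ℝ A]
    refine cfc_congr fun x _ => ?_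
    by_cases hx : 0 ≤ x <;> simp [s, hx]
  · have hsA : cfc s A * A = cfc (fun x : ℝ => |x|) A := by
      nth_rw 2 [← cfc_id' ℝ A]
      rw [← cfc_mul s (fun x : ℝ => x) A]
      refine cfc_congr fun x _ => ?_
      by_cases hx : 0 ≤ x
      · simp [s, hx, abs_of_nonneg hx]
      · simp [s, hx, abs_of_neg (not_le.mp hx)]
    rw [hsA, traceNorm_eq_re_trace_cfc_abs hA]

end TraceNorm

namespace Matrix

variable {n : Type*} [Fintype n] {ρ C D P Q : Matrix n n ℂ}

lemma _root_.IsStarProjection.trace_mul_mul_conjTranspose (hP : IsStarProjection P)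
    (ρ : Matrix n n ℂ) : (P * ρ * Pᴴ).trace = (P * ρ).trace := by
  rw [← star_eq_conjTranspose, hP.isSelfAdjoint.star_eq, trace_mul_comm, ← mul_assoc,
    hP.isIdempotentElem.eq]

lemma PosSemidef.re_trace_mul_mul_conjTranspose_nonneg (hρ : ρ.PosSemidef) (X : Matrix n n ℂ) :
    0 ≤ (X * ρ * Xᴴ).trace.re :=
  (RCLike.nonneg_iff.mp (hρ.mul_mul_conjTranspose_same X).trace_nonneg).1

lemma PosSemidef.norm_trace_mul_mul_conjTranspose_le (hρ : ρ.PosSemidef) (X Y : Matrix n n ℂ) :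
    ‖(Y * ρ * Xᴴ).trace‖ ≤ √(X * ρ * Xᴴ).trace.re * √(Y * ρ * Yᴴ).trace.re := by
  let _ := ρ.toMatrixSeminormedAddCommGroup hρ
  let _ := ρ.toMatrixInnerProductSpace hρ
  have h := norm_inner_le_norm (𝕜 := ℂ) X Y
  rwa [norm_eq_sqrt_re_inner (𝕜 := ℂ) X, norm_eq_sqrt_re_inner (𝕜 := ℂ) Y] at h

variable [DecidableEq n]

lemma PosSemidef.re_trace_mul_mul_conjTranspose_le_four (hρ : ρ.PosSemidef)
    (hCD : star C * C + star D * D = 4) (X : Matrix n n ℂ) :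
    (D * X * ρ * (D * X)ᴴ).trace.re ≤ 4 * (X * ρ * Xᴴ).trace.re := by
  have hcyc (Y : Matrix n n ℂ) :
      (Y * X * ρ * (Y * X)ᴴ).trace = (star Y * Y * (X * ρ * Xᴴ)).trace :=
    calc (Y * X * ρ * (Y * X)ᴴ).trace = (Y * (X * ρ * Xᴴ * Yᴴ)).trace := by
          simp only [conjTranspose_mul, Matrix.mul_assoc]
      _ = (X * ρ * Xᴴ * Yᴴ * Y).trace := trace_mul_comm _ _
      _ = (star Y * Y * (X * ρ * Xᴴ)).trace := by
          rw [trace_mul_comm (star Y * Y)]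
          simp only [star_eq_conjTranspose, Matrix.mul_assoc]
  have hsum : (D * X * ρ * (D * X)ᴴ).trace + (C * X * ρ * (C * X)ᴴ).trace
      = 4 * (X * ρ * Xᴴ).trace := by
    rw [hcyc, hcyc, ← trace_add, ← add_mul, add_comm, hCD, ← Nat.cast_ofNat, ← nsmul_eq_mul,
      trace_smul, nsmul_eq_mul, Nat.cast_ofNat]
  have hC := hρ.re_trace_mul_mul_conjTranspose_nonneg (C * X)
  have hsum_re := congrArg Complex.re hsum
  simp only [Complex.add_re, Complex.mul_re, Complex.re_ofNat, Complex.im_ofNat, zero_mul,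
    sub_zero] at hsum_re
  linarith

lemma PosSemidef.norm_trace_mul_mul_mul_le (hρ : ρ.PosSemidef)
    (hCD : star C * C + star D * D = 4) (hD : IsSelfAdjoint D) (hP : IsStarProjection P)
    (hQ : IsStarProjection Q) :
    ‖(P * D * Q * ρ).trace‖ ≤ 2 * √(P * ρ).trace.re * √(Q * ρ).trace.re := by
  have hcyc : (P * D * Q * ρ).trace = (Q * ρ * (D * P)ᴴ).trace := by
    rw [conjTranspose_mul, ← star_eq_conjTranspose, ← star_eq_conjTranspose, hD.star_eq,
      hP.isSelfAdjoint.star_eq, Matrix.mul_assoc (P * D), trace_mul_comm]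
  calc ‖(P * D * Q * ρ).trace‖
      ≤ √(D * P * ρ * (D * P)ᴴ).trace.re * √(Q * ρ * Qᴴ).trace.re :=
        hcyc ▸ hρ.norm_trace_mul_mul_conjTranspose_le _ _
    _ ≤ √(4 * (P * ρ * Pᴴ).trace.re) * √(Q * ρ * Qᴴ).trace.re := by
        gcongr
        exact hρ.re_trace_mul_mul_conjTranspose_le_four hCD P
    _ = 2 * √(P * ρ).trace.re * √(Q * ρ).trace.re := by
        rw [Real.sqrt_mul zero_le_four, show √4 = 2 by norm_num,
          hP.trace_mul_mul_conjTranspose, hQ.trace_mul_mul_conjTranspose]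

lemma PosSemidef.norm_trace_mul_le_of_mul_add_mul_eq (hρ : ρ.PosSemidef)
    (hCD : star C * C + star D * D = 4) (hD : IsSelfAdjoint D) (hP : IsStarProjection P)
    (hPD : P * D + D * P = D) :
    ‖(D * ρ).trace‖ ≤ 4 * √(P * ρ).trace.re * √((1 - P) * ρ).trace.re := by
  have hPDP : P * D * P = 0 := by
    have h := congrArg (P * ·) hPD
    simp only [mul_add, ← mul_assoc, hP.isIdempotentElem.eq] at h
    simpa using h
  have hsplit : D = P * D * (1 - P) + (1 - P) * D * P :=
    calc D = P * D + D * P - 2 * (P * D * P) := by rw [hPDP, hPD, mul_zero, sub_zero]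
      _ = P * D * (1 - P) + (1 - P) * D * P := by noncomm_ring
  calc ‖(D * ρ).trace‖
      = ‖(P * D * (1 - P) * ρ).trace + ((1 - P) * D * P * ρ).trace‖ := by
        rw [← trace_add, ← add_mul, ← hsplit]
    _ ≤ 2 * √(P * ρ).trace.re * √((1 - P) * ρ).trace.re
        + 2 * √((1 - P) * ρ).trace.re * √(P * ρ).trace.re :=
        (norm_add_le _ _).trans (add_le_add (hρ.norm_trace_mul_mul_mul_le hCD hD hP hP.one_sub)
          (hρ.norm_trace_mul_mul_mul_le hCD hD hP.one_sub hP))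
    _ = 4 * √(P * ρ).trace.re * √((1 - P) * ρ).trace.re := by ring

end Matrix

section TensorProduct

variable {ι κ : Type*}

lemma IsSelfAdjoint.kronecker {A : Matrix ι ι ℂ} {B : Matrix κ κ ℂ} (hA : IsSelfAdjoint A)
    (hB : IsSelfAdjoint B) : IsSelfAdjoint (A ⊗ₖ B) := by
  rw [IsSelfAdjoint, star_eq_conjTranspose, conjTranspose_kronecker, ← star_eq_conjTranspose,
    ← star_eq_conjTranspose, hA.star_eq, hB.star_eq]

variable [Fintype ι] [DecidableEq ι]

lemma exists_star_mul_self_add_star_mul_self_kronecker_sub_eq_four {W : Matrix ι ι ℂ}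
    (hW : IsSelfAdjoint W) (hWW : W * W = 1) :
    ∃ C : Matrix (ι × ι) (ι × ι) ℂ,
      star C * C + star (W ⊗ₖ (1 : Matrix ι ι ℂ) - 1 ⊗ₖ W) * (W ⊗ₖ 1 - 1 ⊗ₖ W) = 4 := by
  refine ⟨_, star_mul_self_add_star_mul_self_eq_four (hW.kronecker (.one _))
    ((IsSelfAdjoint.one _).kronecker hW) ?_ ?_ ?_⟩
  · rw [← mul_kronecker_mul, hWW, one_mul, one_kronecker_one]
  · rw [← mul_kronecker_mul, hWW, one_mul, one_kronecker_one]
  · rw [Commute, SemiconjBy, ← mul_kronecker_mul, ← mul_kronecker_mul]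
    simp only [one_mul, mul_one]

lemma swapMatrix_mul (A : Matrix (ι × ι) (ι × ι) ℂ) :
    swapMatrix ι * A = A.submatrix Prod.swap id := by
  ext p q
  simp [swapMatrix, mul_apply, Fintype.sum_prod_type, ite_and, Prod.swap]

lemma mul_swapMatrix (A : Matrix (ι × ι) (ι × ι) ℂ) :
    A * swapMatrix ι = A.submatrix id Prod.swap := by
  ext p q
  simp [swapMatrix, mul_apply, Fintype.sum_prod_type, ite_and, Prod.swap]

lemma swapMatrix_mul_self : swapMatrix ι * swapMatrix ι = 1 := by
  rw [swapMatrix_mul]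
  ext p q
  simp [swapMatrix, one_apply, Prod.ext_iff, and_comm]

lemma isSelfAdjoint_swapMatrix : IsSelfAdjoint (swapMatrix ι) := by
  ext p q
  simp [swapMatrix, eq_comm, and_comm]

lemma swapMatrix_mul_kronecker (A B : Matrix ι ι ℂ) :
    swapMatrix ι * (A ⊗ₖ B) = (B ⊗ₖ A) * swapMatrix ι := by
  ext p q
  simp [swapMatrix_mul, mul_swapMatrix, mul_comm]

lemma swapMatrix_mul_kronecker_sub (W : Matrix ι ι ℂ) :
    swapMatrix ι * (W ⊗ₖ 1 - 1 ⊗ₖ W) = -((W ⊗ₖ 1 - 1 ⊗ₖ W) * swapMatrix ι) := by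
  rw [mul_sub, sub_mul, swapMatrix_mul_kronecker, swapMatrix_mul_kronecker, neg_sub]

end TensorProduct

section PartialTrace

variable {ι κ : Type*}

lemma Matrix.IsHermitian.ptraceSnd [Fintype κ] {M : Matrix (ι × κ) (ι × κ) ℂ}
    (hM : M.IsHermitian) : (ptraceSnd M).IsHermitian := by
  ext i i'
  simp [_root_.ptraceSnd, hM.apply]

lemma Matrix.IsHermitian.ptraceFst [Fintype ι] {M : Matrix (ι × κ) (ι × κ) ℂ}
    (hM : M.IsHermitian) : (ptraceFst M).IsHermitian := by
  ext j j'
  simp [_root_.ptraceFst, hM.apply]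

variable [Fintype ι] [Fintype κ]

lemma trace_kronecker_one_mul [DecidableEq κ] (W : Matrix ι ι ℂ)
    (M : Matrix (ι × κ) (ι × κ) ℂ) :
    ((W ⊗ₖ (1 : Matrix κ κ ℂ)) * M).trace = (W * ptraceSnd M).trace := by
  simp only [trace, diag_apply, mul_apply, kroneckerMap_apply, one_apply, mul_ite, mul_one,
    mul_zero, ite_mul, zero_mul, Fintype.sum_prod_type, sum_ite_eq, mem_univ, ↓reduceIte,
    ptraceSnd, of_apply, mul_sum]
  exact sum_congr rfl fun _ _ => sum_comm

lemma trace_one_kronecker_mul [DecidableEq ι] (W : Matrix κ κ ℂ)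
    (M : Matrix (ι × κ) (ι × κ) ℂ) :
    (((1 : Matrix ι ι ℂ) ⊗ₖ W) * M).trace = (W * ptraceFst M).trace := by
  simp only [trace, diag_apply, mul_apply, kroneckerMap_apply, one_apply, ite_mul, one_mul,
    zero_mul, Fintype.sum_prod_type, sum_ite_irrel, sum_const_zero, sum_ite_eq, mem_univ,
    ↓reduceIte, ptraceFst, of_apply, mul_sum]
  rw [sum_comm]
  exact sum_congr rfl fun _ _ => sum_comm

lemma trace_mul_ptraceSnd_sub_ptraceFst [DecidableEq ι] (W : Matrix ι ι ℂ)
    (M : Matrix (ι × ι) (ι × ι) ℂ) :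
    (W * (ptraceSnd M - ptraceFst M)).trace = ((W ⊗ₖ 1 - 1 ⊗ₖ W) * M).trace := by
  rw [mul_sub, trace_sub, sub_mul, trace_sub, trace_kronecker_one_mul, trace_one_kronecker_mul]

end PartialTrace

/-- If the SWAP test on a density matrix `ρ` accepts with probability at least
`1 - 1/z` for `z ≥ 1`, then the trace distance between the two reduced states of
`ρ` is at most `2/√z + 1/z`. -/
theorem stmt_8 {ι : Type*} [Fintype ι] [DecidableEq ι] (z : ℝ) (hz : 1 ≤ z)
    (ρ : Matrix (ι × ι) (ι × ι) ℂ) (hρ : ρ.PosSemidef) (htr : ρ.trace = 1)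
    (hacc : ((((2 : ℂ)⁻¹ • (1 + swapMatrix ι)) * ρ).trace).re ≥ 1 - 1 / z) :
    (1 / 2) * traceNorm (ptraceSnd ρ - ptraceFst ρ) ≤ 2 / Real.sqrt z + 1 / z := by
  obtain ⟨W, hW, hWW, hnorm⟩ :=
    (hρ.1.ptraceSnd.sub hρ.1.ptraceFst).exists_involution_traceNorm_eq
  set P : Matrix (ι × ι) (ι × ι) ℂ := (2 : ℂ)⁻¹ • (1 + swapMatrix ι)
  set D : Matrix (ι × ι) (ι × ι) ℂ := W ⊗ₖ 1 - 1 ⊗ₖ W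
  have hP : IsStarProjection P :=
    isStarProjection_half_smul_one_add isSelfAdjoint_swapMatrix swapMatrix_mul_self
  have hD : IsSelfAdjoint D := (hW.kronecker (.one _)).sub ((IsSelfAdjoint.one _).kronecker hW)
  obtain ⟨C, hCD⟩ := exists_star_mul_self_add_star_mul_self_kronecker_sub_eq_four hW hWW
  have hbound := hρ.norm_trace_mul_le_of_mul_add_mul_eq hCD hD hP
    (half_smul_one_add_mul_add_mul_eq_of_mul_eq_neg (swapMatrix_mul_kronecker_sub W))
  have hQ : ((1 - P) * ρ).trace.re = 1 - (P * ρ).trace.re := by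
    rw [sub_mul, one_mul, trace_sub, htr, Complex.sub_re, Complex.one_re]
  calc (1 / 2) * traceNorm (ptraceSnd ρ - ptraceFst ρ) = (1 / 2) * (D * ρ).trace.re := by
        rw [hnorm, trace_mul_ptraceSnd_sub_ptraceFst]
    _ ≤ (1 / 2) * (4 * (√(P * ρ).trace.re * √(1 - (P * ρ).trace.re))) := by
        gcongr
        rw [← hQ, ← mul_assoc]
        exact (Complex.re_le_norm _).trans hbound
    _ ≤ (1 / 2) * (4 * (1 / √z)) := by
        gcongr
        exact sqrt_mul_sqrt_one_sub_le (zero_lt_one.trans_le hz) hacc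
    _ = 2 / √z := by ring
    _ ≤ 2 / √z + 1 / z := le_add_of_nonneg_right (by positivity)

end
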